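/- Let n be a positive integer divisible by 8 and let b be a nonzero rational number. Then a = 2^(n/2)·b^n is an n-th power in ℚ_p for all but finitely many primes p, even though a need not be a perfect n-th power in ℚ. -/

import Mathlib

/-!
Over any finite field `16` is an eighth power:
`x⁸ - 16 = (x² - 2)(x² + 2)((x - 1)² + 1)((x + 1)² + 1)`, and `-1`, `2`, `-2` cannot all be
non-squares since the non-squares form a single coset of the squares. For odd `p` neither `8`
nor `16` vanishes mod `p`, so Hensel's lemma lifts such a root to `y ∈ ℤ_[p]` with `y⁸ = 16`,
and then `(y b)ⁿ = 16^(n/8) bⁿ = 2^(n/2) bⁿ`.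
-/

open Polynomial

theorem FiniteField.isSquare_mul_of_not_isSquare {F : Type*} [Field F] [Finite F] {a b : F}
    (ha : ¬IsSquare a) (hb : ¬IsSquare b) : IsSquare (a * b) := by
  classical
  have := Fintype.ofFinite F
  have hab : a * b ≠ 0 :=
    mul_ne_zero (by rintro rfl; exact ha .zero) (by rintro rfl; exact hb .zero)
  rw [← quadraticChar_neg_one_iff_not_isSquare] at ha hb
  rw [← quadraticChar_one_iff_isSquare hab, map_mul, ha, hb, neg_mul_neg, one_mul]

theorem FiniteField.exists_pow_eight_eq_sixteen {F : Type*} [Field F] [Finite F] :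
    ∃ x : F, x ^ 8 = 16 := by
  by_cases hneg : IsSquare (-1 : F)
  · obtain ⟨i, hi⟩ := hneg
    refine ⟨1 + i, ?_⟩
    have : (1 + i) ^ 2 = 2 * i := by linear_combination -hi
    calc (1 + i) ^ 8 = ((1 + i) ^ 2) ^ 4 := by ring
      _ = 16 * (i * i) ^ 2 := by rw [this]; ring
      _ = 16 := by rw [← hi]; norm_num
  have h2 : IsSquare (2 : F) ∨ IsSquare (-2 : F) := by
    by_contra! h
    exact h.2 (by simpa using isSquare_mul_of_not_isSquare hneg h.1)
  obtain ⟨r, hr⟩ | ⟨r, hr⟩ := h2 <;>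
    exact ⟨r, by rw [show r ^ 8 = (r * r) ^ 4 by ring, ← hr]; norm_num⟩

namespace PadicInt

variable {p : ℕ} [Fact p.Prime]

theorem norm_lt_one_iff_toZMod_eq_zero {x : ℤ_[p]} : ‖x‖ < 1 ↔ toZMod x = 0 := by
  rw [← mem_nonunits, ← IsLocalRing.mem_maximalIdeal, ← ker_toZMod, RingHom.mem_ker]

theorem norm_eq_one_iff_toZMod_ne_zero {x : ℤ_[p]} : ‖x‖ = 1 ↔ toZMod x ≠ 0 := by
  rw [ne_eq, ← norm_lt_one_iff_toZMod_eq_zero, not_lt]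
  exact ⟨ge_of_eq, fun h => le_antisymm x.norm_le_one h⟩

theorem exists_pow_eq_of_toZMod {k : ℕ} (hk : (k : ZMod p) ≠ 0) {c : ℤ_[p]}
    (hc : toZMod c ≠ 0) (h : ∃ a : ZMod p, a ^ k = toZMod c) : ∃ z : ℤ_[p], z ^ k = c := by
  obtain ⟨a, ha⟩ := h
  obtain ⟨A, rfl⟩ := ZMod.ringHom_surjective (toZMod : ℤ_[p] →+* ZMod p) a
  have hA : toZMod A ≠ 0 := fun h0 =>
    hc (by rw [← ha, h0, zero_pow (by rintro rfl; simp at hk)])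
  set f : ℤ_[p][X] := X ^ k - C c
  have hf : ‖f.eval A‖ < ‖f.derivative.eval A‖ ^ 2 := by
    have hval : ‖f.eval A‖ < 1 := by
      simp [f, norm_lt_one_iff_toZMod_eq_zero, ha]
    have hder : ‖f.derivative.eval A‖ = 1 := by
      rw [norm_eq_one_iff_toZMod_ne_zero, derivative_sub, derivative_C, sub_zero, derivative_X_pow]
      simp [hk, hA]
    rwa [hder, one_pow]
  obtain ⟨z, hz, -⟩ := hensels_lemma hf
  exact ⟨z, by simpa [f, sub_eq_zero] using hz⟩

end PadicInt

theorem Padic.exists_pow_eight_eq_sixteen {p : ℕ} [Fact p.Prime] (hp : p ≠ 2) :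
    ∃ y : ℚ_[p], y ^ 8 = 16 := by
  have h2 : (2 : ZMod p) ≠ 0 := Ring.two_ne_zero (by rwa [ZMod.ringChar_zmod_n])
  have h8 : ((8 : ℕ) : ZMod p) ≠ 0 := by convert pow_ne_zero 3 h2 using 1; norm_num
  have h16 : PadicInt.toZMod (16 : ℤ_[p]) ≠ 0 := by
    rw [map_ofNat]; convert pow_ne_zero 4 h2 using 1; norm_num
  obtain ⟨z, hz⟩ := PadicInt.exists_pow_eq_of_toZMod h8 h16
    (by simpa only [map_ofNat] using FiniteField.exists_pow_eight_eq_sixteen)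
  exact ⟨z, by exact_mod_cast congrArg ((↑) : ℤ_[p] → ℚ_[p]) hz⟩

theorem exceptional_case_grunwald_wang_general (n : ℕ) (hn : 8 ∣ n) (b : ℚ) :
    ∃ S : Finset ℕ, ∀ p : ℕ, ∀ [Fact p.Prime], p ∉ S →
      ∃ y : ℚ_[p], y ^ n = ((2 ^ (n / 2) * b ^ n : ℚ) : ℚ_[p]) := by
  obtain ⟨m, rfl⟩ := hn
  refine ⟨{2}, fun p _ hp => ?_⟩
  obtain ⟨y, hy⟩ := Padic.exists_pow_eight_eq_sixteen (Finset.notMem_singleton.mp hp)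
  refine ⟨y * b, ?_⟩
  rw [show 8 * m / 2 = 4 * m by omega]
  push_cast
  rw [mul_pow, pow_mul y, hy, pow_mul (2 : ℚ_[p])]
  norm_num

/-- If `8 ∣ n` and `b` is a nonzero rational, then `2^(n/2) · bⁿ` is an `n`-th power in
`ℚ_p` for all but finitely many primes `p`. -/
theorem exceptional_case_grunwald_wang (n : ℕ) (hn : 8 ∣ n) (b : ℚ) (hb : b ≠ 0) :
    ∃ S : Finset ℕ, ∀ p : ℕ, ∀ [Fact p.Prime], p ∉ S →
      ∃ y : ℚ_[p], y ^ n = ((2 ^ (n / 2) * b ^ n : ℚ) : ℚ_[p]) :=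
  exceptional_case_grunwald_wang_general n hn b
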